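/- arXiv:1412.3187 — 3 statements merged into one kernel-verified Lean document; each statement's English description precedes it below -/
import Mathlib

section
/- Let $u_1 \ge u_2 \ge \cdots \ge u_n \ge 0$ be real numbers. Then there exists an index $j$ with $1 \le j \le n$ such that $j \cdot u_j \ge \frac{1}{1+\ln n}\sum_{i=1}^n u_i$. -/
/-- A sorted nonincreasing sequence of nonnegative reals `u 0 ≥ u 1 ≥ ⋯ ≥ u (n-1) ≥ 0`
(indexed by `Fin n`, so `u j` plays the role of `u_{j+1}`) has some index `j` with
`(j+1) * u j ≥ (∑ i, u i) / (1 + ln n)`. -/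
theorem exists_prefix_term_ge_log_fraction (n : ℕ) (hn : 1 ≤ n) (u : Fin n → ℝ)
    (hmono : Antitone u) (hnonneg : ∀ i, 0 ≤ u i) :
    ∃ j : Fin n, ((j : ℕ) + 1 : ℝ) * u j ≥ (∑ i, u i) / (1 + Real.log n) := by
  set S := ∑ i, u i with hS
  have hlog : (0:ℝ) ≤ Real.log n := Real.log_nonneg (by exact_mod_cast hn)
  have hL : (0:ℝ) < 1 + Real.log n := by linarith
  by_cases hS0 : S ≤ 0
  · refine ⟨⟨0, hn⟩, ?_⟩
    have : S / (1 + Real.log n) ≤ 0 := div_nonpos_of_nonpos_of_nonneg hS0 hL.le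
    have h0 : 0 ≤ u ⟨0, hn⟩ := hnonneg _
    simp only [Fin.val_mk, Nat.cast_zero, zero_add, one_mul]
    linarith
  push_neg at hS0
  by_contra hcon
  push_neg at hcon
  have key : ∀ j : Fin n, u j < S / (1 + Real.log n) * (1 / ((j:ℕ) + 1)) := by
    intro j
    have hj := hcon j
    have hjpos : (0:ℝ) < (j:ℕ) + 1 := by positivity
    rw [mul_one_div, lt_div_iff₀ hjpos, mul_comm]
    exact hj
  have hsum : S < ∑ j : Fin n, S / (1 + Real.log n) * (1 / ((j:ℕ) + 1)) := by
    rw [hS]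
    exact Finset.sum_lt_sum_of_nonempty (Finset.univ_nonempty_iff.mpr ⟨⟨0, hn⟩⟩) fun j _ => key j
  have hharm : ∑ j : Fin n, (1 / ((j:ℕ) + 1) : ℝ) = (harmonic n : ℝ) := by
    rw [Fin.sum_univ_eq_sum_range (fun i => (1 / ((i:ℕ)+1) : ℝ))]
    push_cast [harmonic]
    simp [one_div]
  rw [← Finset.mul_sum, hharm] at hsum
  have hle : (harmonic n : ℝ) ≤ 1 + Real.log n := harmonic_le_one_add_log n
  have : S / (1 + Real.log n) * (harmonic n : ℝ) ≤ S := by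
    calc S / (1 + Real.log n) * (harmonic n : ℝ)
        ≤ S / (1 + Real.log n) * (1 + Real.log n) := by
          apply mul_le_mul_of_nonneg_left hle (by positivity)
    _ = S := by field_simp
  linarith
end

section
/- Let $X$ be a nonnegative random variable supported on $[0, tc]$ for some $t \ge 1$, $c > 0$, such that $p \cdot \Pr[X \ge p] \le c$ for all $p > 0$. Then $\mathrm{Var}(X) \le (2t-1)c^2$. -/
/-!
By the layer-cake formula, `E[X²] = ∫₀^{tc} 2p·Pr[X > p] dp ≤ 2tc²` since `p·Pr[X ≥ p] ≤ c`,
while `X ≤ tc` gives `E[X²] ≤ tc·E[X]`. If `E[X] ≥ c`, the first bound gives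
`Var X ≤ 2tc² - c²`; otherwise the second gives `Var X ≤ E[X²] ≤ tc² ≤ (2t - 1)c²`.
-/

open MeasureTheory ProbabilityTheory Set

section

variable {Ω : Type*} [MeasurableSpace Ω] {μ : Measure Ω} {X : Ω → ℝ}

lemma integral_sq_le_mul_integral {M : ℝ} (hX : Integrable X μ) (hX0 : 0 ≤ᵐ[μ] X)
    (hXM : ∀ᵐ ω ∂μ, X ω ≤ M) : ∫ ω, X ω ^ 2 ∂μ ≤ M * ∫ ω, X ω ∂μ := by
  rw [← integral_const_mul]
  refine integral_mono_of_nonneg (hX0.mono fun ω _ => sq_nonneg _) (hX.const_mul M) ?_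
  filter_upwards [hX0, hXM] with ω h0 hM
  nlinarith [h0.trans hM, show (0 : ℝ) ≤ X ω from h0]

lemma lintegral_ofReal_sq_eq_lintegral_meas_lt_mul (hXm : AEMeasurable X μ) (hX0 : 0 ≤ᵐ[μ] X) :
    ∫⁻ ω, ENNReal.ofReal (X ω ^ 2) ∂μ =
      ∫⁻ p in Ioi 0, μ {ω | p < X ω} * ENNReal.ofReal (2 * p) := by
  have hprim (x : ℝ) : ∫ p in 0..x, 2 * p = x ^ 2 := by
    rw [intervalIntegral.integral_const_mul, integral_id]; ring
  simp_rw [← hprim]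
  refine lintegral_comp_eq_lintegral_meas_lt_mul μ hX0 hXm
    (fun _ _ => (continuous_const.mul continuous_id).intervalIntegrable _ _) ?_
  exact (ae_restrict_iff' measurableSet_Ioi).2 (ae_of_all _ fun p hp => by
    simp only [mem_Ioi] at hp; positivity)

lemma meas_lt_mul_ofReal_le_indicator [IsFiniteMeasure μ] {c M p : ℝ} (hp : 0 < p)
    (hXM : ∀ᵐ ω ∂μ, X ω ≤ M) (hrev : ∀ p : ℝ, 0 < p → p * μ.real {ω | p ≤ X ω} ≤ c) :
    μ {ω | p < X ω} * ENNReal.ofReal (2 * p) ≤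
      (Iic M).indicator (fun _ => ENNReal.ofReal (2 * c)) p := by
  by_cases hpM : p ≤ M
  · rw [indicator_of_mem (show p ∈ Iic M from hpM)]
    calc μ {ω | p < X ω} * ENNReal.ofReal (2 * p)
        ≤ μ {ω | p ≤ X ω} * ENNReal.ofReal (2 * p) := by gcongr; exact le_of_lt
      _ = ENNReal.ofReal (2 * (p * μ.real {ω | p ≤ X ω})) := by
          rw [← ofReal_measureReal, ← ENNReal.ofReal_mul measureReal_nonneg]; ring_nf
      _ ≤ ENNReal.ofReal (2 * c) := ENNReal.ofReal_le_ofReal (by linarith [hrev p hp])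
  · have hnull : μ {ω | p < X ω} = 0 :=
      measure_eq_zero_iff_ae_notMem.2 (hXM.mono fun ω h => by simp only [mem_ofPred_eq]; linarith)
    simp [hnull]

lemma integral_sq_le_of_mul_measureReal_le [IsFiniteMeasure μ] {c M : ℝ} (hM : 0 ≤ M)
    (hXm : AEMeasurable X μ) (hX0 : 0 ≤ᵐ[μ] X) (hXM : ∀ᵐ ω ∂μ, X ω ≤ M)
    (hrev : ∀ p : ℝ, 0 < p → p * μ.real {ω | p ≤ X ω} ≤ c) :
    ∫ ω, X ω ^ 2 ∂μ ≤ 2 * c * M := by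
  have hc : 0 ≤ c := (mul_nonneg zero_le_one measureReal_nonneg).trans (hrev 1 one_pos)
  have hlin : ∫⁻ ω, ENNReal.ofReal (X ω ^ 2) ∂μ ≤ ENNReal.ofReal (2 * c * M) :=
    calc ∫⁻ ω, ENNReal.ofReal (X ω ^ 2) ∂μ
        ≤ ∫⁻ p in Ioi 0, (Iic M).indicator (fun _ => ENNReal.ofReal (2 * c)) p := by
          rw [lintegral_ofReal_sq_eq_lintegral_meas_lt_mul hXm hX0]
          exact setLIntegral_mono (measurable_const.indicator measurableSet_Iic)
            fun p hp => meas_lt_mul_ofReal_le_indicator hp hXM hrev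
      _ = ENNReal.ofReal (2 * c * M) := by
          rw [lintegral_indicator_const measurableSet_Iic, Measure.restrict_apply measurableSet_Iic,
            Iic_inter_Ioi, Real.volume_Ioc, ← ENNReal.ofReal_mul (by positivity)]
          ring_nf
  rw [integral_eq_lintegral_of_nonneg_ae (hX0.mono fun ω _ => sq_nonneg _)
    (hXm.pow_const 2).aestronglyMeasurable]
  exact ENNReal.toReal_le_of_le_ofReal (by positivity) hlin

end

/-- A nonnegative random variable supported on `[0, t·c]`, whose posted-price revenue
is at most `c` at every price, has variance at most `(2t - 1)·c²`. -/
theorem variance_le_of_revenue_le (Ω : Type*) [MeasurableSpace Ω]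
    (P : Measure Ω) [IsProbabilityMeasure P]
    (X : Ω → ℝ) (hXm : Measurable X)
    (t c : ℝ) (ht : 1 ≤ t) (hc : 0 < c)
    (hsupp : ∀ ω, 0 ≤ X ω ∧ X ω ≤ t * c)
    (hrev : ∀ p : ℝ, 0 < p → p * (P {ω | X ω ≥ p}).toReal ≤ c) :
    variance X P ≤ (2 * t - 1) * c ^ 2 := by
  have htc : 0 ≤ t * c := by positivity
  have hX0 : 0 ≤ᵐ[P] X := ae_of_all _ fun ω => (hsupp ω).1
  have hXM : ∀ᵐ ω ∂P, X ω ≤ t * c := ae_of_all _ fun ω => (hsupp ω).2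
  have hX : MemLp X 2 P := memLp_of_bounded (hX0.and hXM) hXm.aestronglyMeasurable 2
  have hmean := integral_sq_le_mul_integral (hX.integrable one_le_two) hX0 hXM
  have hlayer := integral_sq_le_of_mul_measureReal_le htc hXm.aemeasurable hX0 hXM hrev
  rw [variance_eq_sub hX]
  simp only [Pi.pow_apply]
  rcases le_or_gt c P[X] with hcm | hmc
  · nlinarith
  · nlinarith [mul_le_mul_of_nonneg_left hmc.le htc]
end

section
/- Let $X_1, \ldots, X_n$ be square-integrable random variables grouped so that variables in the same group are almost surely equal and variables in different groups are independent, with $n_i$ the size of the group containing $X_i$. Suppose each $X_i$ is supported on $[0, t_i c_i]$ with $t_i = r/(c_i n_i)$ where $r = \sum_i c_i$ and each $X_i$ satisfies $p\Pr[X_i \ge p] \le c_i$ for all $p > 0$. Then $\mathrm{Var}\left(\sum_i X_i\right) \le 2r^2$. -/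
/-!
Write `n_i` for the size of the group of `i` and `M_i = t_i c_i = r / n_i`. By the layer-cake
formula, `𝔼[X_i²] = ∫₀^{M_i} 2p ℙ[X_i ≥ p] dp ≤ 2 c_i M_i`. Covariances vanish across groups and
equal `Var(X_i)` within a group, so `Var(∑ X_i) = ∑ n_i Var(X_i) ≤ ∑ 2 r c_i = 2r²`.
-/

open MeasureTheory ProbabilityTheory Set Finset

namespace ProbabilityTheory

variable {Ω : Type*} [MeasurableSpace Ω] {μ : Measure Ω}

lemma lintegral_sq_eq_lintegral_meas_le_mul {X : Ω → ℝ} (hX0 : 0 ≤ᵐ[μ] X)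
    (hX : AEMeasurable X μ) :
    ∫⁻ ω, ENNReal.ofReal (X ω ^ 2) ∂μ =
      ∫⁻ t in Ioi 0, μ {ω | t ≤ X ω} * ENNReal.ofReal (2 * t) := by
  have hsq (x : ℝ) : ∫ t in 0..x, 2 * t = x ^ 2 := by
    rw [intervalIntegral.integral_const_mul, integral_id]
    ring
  simp_rw [← hsq]
  refine lintegral_comp_eq_lintegral_meas_le_mul μ hX0 hX
    (fun _ _ => (continuous_const.mul continuous_id).intervalIntegrable _ _) ?_
  filter_upwards [ae_restrict_mem measurableSet_Ioi] with t (ht : 0 < t)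
  positivity

lemma integral_sq_le_of_mul_measureReal_le [IsFiniteMeasure μ] {X : Ω → ℝ}
    (hX : AEMeasurable X μ) {M c : ℝ} (hM : 0 ≤ M) (hX0 : 0 ≤ᵐ[μ] X)
    (hXM : ∀ᵐ ω ∂μ, X ω ≤ M) (htail : ∀ p > 0, p * μ.real {ω | p ≤ X ω} ≤ c) :
    ∫ ω, X ω ^ 2 ∂μ ≤ 2 * c * M := by
  have hc : 0 ≤ c := le_trans (by positivity) (htail 1 one_pos)
  have hbound : ∀ t ∈ Ioi (0 : ℝ), μ {ω | t ≤ X ω} * ENNReal.ofReal (2 * t) ≤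
      (Ioc 0 M).indicator (fun _ => ENNReal.ofReal (2 * c)) t := by
    intro t (ht : 0 < t)
    by_cases htM : t ≤ M
    · rw [indicator_of_mem (show t ∈ Ioc 0 M from ⟨ht, htM⟩),
        ← ofReal_measureReal (measure_ne_top _ _), ← ENNReal.ofReal_mul measureReal_nonneg]
      exact ENNReal.ofReal_le_ofReal (by linarith [htail t ht])
    · have hnull : μ {ω | t ≤ X ω} = 0 :=
        measure_mono_null (fun ω (hω : t ≤ X ω) (hωM : X ω ≤ M) => htM (hω.trans hωM))
          (ae_iff.mp hXM)
      simp [hnull]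
  have hlint : ∫⁻ ω, ENNReal.ofReal (X ω ^ 2) ∂μ ≤ ENNReal.ofReal (2 * c * M) :=
    calc ∫⁻ ω, ENNReal.ofReal (X ω ^ 2) ∂μ
        = ∫⁻ t in Ioi 0, μ {ω | t ≤ X ω} * ENNReal.ofReal (2 * t) :=
          lintegral_sq_eq_lintegral_meas_le_mul hX0 hX
      _ ≤ ∫⁻ t, (Ioc 0 M).indicator (fun _ => ENNReal.ofReal (2 * c)) t :=
          (setLIntegral_mono' measurableSet_Ioi hbound).trans (setLIntegral_le_lintegral _ _)
      _ = ENNReal.ofReal (2 * c * M) := by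
          rw [lintegral_indicator_const measurableSet_Ioc, Real.volume_Ioc, sub_zero,
            ← ENNReal.ofReal_mul (by positivity)]
  rw [integral_eq_lintegral_of_nonneg_ae (ae_of_all _ fun ω => sq_nonneg _)
    (hX.pow_const 2).aestronglyMeasurable]
  exact ENNReal.toReal_le_of_le_ofReal (by positivity) hlint

lemma covariance_congr_right {X Y Y' : Ω → ℝ} (h : Y =ᵐ[μ] Y') :
    cov[X, Y; μ] = cov[X, Y'; μ] := by
  unfold covariance
  rw [integral_congr_ae h]
  refine integral_congr_ae ?_
  filter_upwards [h] with ω hω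
  rw [hω]

lemma variance_fun_sum_eq_sum_card_mul_variance [IsFiniteMeasure μ] {ι κ : Type*} [Fintype ι]
    [DecidableEq κ] {X : ι → Ω → ℝ} (g : ι → κ) (hX : ∀ i, MemLp (X i) 2 μ)
    (hsame : ∀ i j, g i = g j → X i =ᵐ[μ] X j)
    (hindep : ∀ i j, g i ≠ g j → IndepFun (X i) (X j) μ) :
    Var[fun ω => ∑ i, X i ω; μ] = ∑ i, #{j | g j = g i} * Var[X i; μ] := by
  have hcov (i j : ι) : cov[X i, X j; μ] = if g j = g i then Var[X i; μ] else 0 := by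
    split_ifs with hij
    · rw [← covariance_congr_right (hsame i j hij.symm), covariance_self (hX i).aemeasurable]
    · exact (hindep i j (Ne.symm hij)).covariance_eq_zero (hX i) (hX j)
  simp_rw [variance_fun_sum hX, hcov, ← sum_filter, sum_const, nsmul_eq_mul]

end ProbabilityTheory

theorem variance_sum_le_two_r_sq_general (Ω : Type*) [MeasurableSpace Ω]
    (P : Measure Ω) [IsProbabilityMeasure P]
    (n m : ℕ) (X : Fin n → Ω → ℝ) (g : Fin n → Fin m)
    (hL2 : ∀ i, MemLp (X i) 2 P)
    (hsame : ∀ i j, g i = g j → X i =ᵐ[P] X j)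
    (hindep : ∀ i j, g i ≠ g j → IndepFun (X i) (X j) P)
    (c : Fin n → ℝ) (hc : ∀ i, 0 < c i)
    (r : ℝ) (hr : r = ∑ i, c i)
    (t : Fin n → ℝ)
    (ht : ∀ i, t i = r / (c i * ((Finset.univ.filter fun j => g j = g i).card : ℝ)))
    (hsupp : ∀ i ω, 0 ≤ X i ω ∧ X i ω ≤ t i * c i)
    (hrev : ∀ i, ∀ p : ℝ, 0 < p → p * (P {ω | X i ω ≥ p}).toReal ≤ c i) :
    variance (fun ω => ∑ i, X i ω) P ≤ 2 * r ^ 2 := by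
  have hr0 : 0 ≤ r := hr ▸ sum_nonneg fun i _ => (hc i).le
  have hcard (i : Fin n) : (0 : ℝ) < #{j | g j = g i} :=
    Nat.cast_pos.mpr (card_pos.mpr ⟨i, by simp⟩)
  have htc (i : Fin n) : t i * c i = r / #{j | g j = g i} := by
    rw [ht i]
    field_simp [(hc i).ne']
  have hsq (i : Fin n) : ∫ ω, X i ω ^ 2 ∂P ≤ 2 * c i * (r / #{j | g j = g i}) := by
    rw [← htc]
    exact integral_sq_le_of_mul_measureReal_le (hL2 i).aemeasurable
      (htc i ▸ div_nonneg hr0 (Nat.cast_nonneg _)) (ae_of_all _ fun ω => (hsupp i ω).1)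
      (ae_of_all _ fun ω => (hsupp i ω).2) (hrev i)
  have hgroup (i : Fin n) : #{j | g j = g i} * Var[X i; P] ≤ 2 * r * c i :=
    calc #{j | g j = g i} * Var[X i; P]
        ≤ #{j | g j = g i} * (2 * c i * (r / #{j | g j = g i})) := by
          gcongr
          exact (variance_le_expectation_sq (hL2 i).1).trans (hsq i)
      _ = 2 * r * c i := by field_simp [(hcard i).ne']
  calc Var[fun ω => ∑ i, X i ω; P] = ∑ i, #{j | g j = g i} * Var[X i; P] :=
        variance_fun_sum_eq_sum_card_mul_variance g hL2 hsame hindep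
    _ ≤ ∑ i, 2 * r * c i := sum_le_sum fun i _ => hgroup i
    _ = 2 * r ^ 2 := by rw [← mul_sum, ← hr]; ring

/-- Core-variance bound for a semi-independent family: with group sizes `n_i`,
thresholds `t_i = r/(c_i n_i)` where `r = ∑ c_i`, each `X_i` supported on `[0, t_i c_i]`
with posted-price revenue at most `c_i`, the variance of the sum is at most `2r²`. -/
theorem variance_sum_le_two_r_sq (Ω : Type*) [MeasurableSpace Ω]
    (P : Measure Ω) [IsProbabilityMeasure P]
    (n m : ℕ) (X : Fin n → Ω → ℝ) (g : Fin n → Fin m)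
    (hXm : ∀ i, Measurable (X i))
    (hL2 : ∀ i, MemLp (X i) 2 P)
    (hsame : ∀ i j, g i = g j → X i =ᵐ[P] X j)
    (hindep : ∀ i j, g i ≠ g j → IndepFun (X i) (X j) P)
    (c : Fin n → ℝ) (hc : ∀ i, 0 < c i)
    (r : ℝ) (hr : r = ∑ i, c i)
    (t : Fin n → ℝ)
    (ht : ∀ i, t i = r / (c i * ((Finset.univ.filter fun j => g j = g i).card : ℝ)))
    (hsupp : ∀ i ω, 0 ≤ X i ω ∧ X i ω ≤ t i * c i)
    (hrev : ∀ i, ∀ p : ℝ, 0 < p → p * (P {ω | X i ω ≥ p}).toReal ≤ c i) :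
    variance (fun ω => ∑ i, X i ω) P ≤ 2 * r ^ 2 :=
  variance_sum_le_two_r_sq_general Ω P n m X g hL2 hsame hindep c hc r hr t ht hsupp hrev
end
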